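/- Let p, q, r, s, b be integers, set A = [[p, s],[q, r]] and d = det A = pr - qs. Then A · [[b, 1],[1, 0]] · [[p, -q],[-s, r]] = [[b·p², d - b·p·q],[d + b·p·q, -b·q²]]. In particular, if A is unimodular and p/q = [a₀,...,a_k] is the rational number of a continued fraction expansion realized by A, then the palindromic continued fraction [a₀,...,a_k, b, -a_k,...,-a₀] represents the rational number b·p²/(b·p·q + d), so for b = ±2 its numerator is 2p². -/

import Mathlib

theorem Matrix.fin_two_mul_mul_eq {R : Type*} [CommRing R] (p q r s b : R) :
    !![p, s; q, r] * !![b, 1; 1, 0] * !![p, -q; -s, r] =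
      !![b * p ^ 2, (p * r - q * s) - b * p * q;
         (p * r - q * s) + b * p * q, -b * q ^ 2] := by
  rw [Matrix.mul_fin_two, Matrix.mul_fin_two]
  ext i j
  fin_cases i <;> fin_cases j <;>
    simp only [Fin.zero_eta, Fin.mk_one, Matrix.of_apply, Matrix.cons_val', Matrix.cons_val_zero,
      Matrix.cons_val_one, Matrix.cons_val_fin_one] <;> ring

theorem palindromic_continued_fraction_matrix_identity (p q r s b : ℤ) :
    (!![p, s; q, r] : Matrix (Fin 2) (Fin 2) ℤ) * !![b, 1; 1, 0] * !![p, -q; -s, r] =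
      !![b * p ^ 2, (p * r - q * s) - b * p * q;
         (p * r - q * s) + b * p * q, -b * q ^ 2] :=
  Matrix.fin_two_mul_mul_eq p q r s b
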